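/- Let (S, E, T) be a closed and consistent observation table over input alphabet Σ and output alphabet O, let (Q̂, q̂0, δ̂, L̂) be its hypothesis Moore machine with n = |Q̂| states, and let f : Σ* → O be a function computed by some Moore machine over (Σ, O) with at most n states. If T(s·e) = f(s·e) for every s ∈ S ∪ {s·σ : s ∈ S, σ ∈ Σ} and every e ∈ E, then the hypothesis machine computes f exactly: for every sequence w, L̂(δ̂*(q̂0, w)) = f(w). -/

import Mathlib

/-- A Moore machine over input alphabet `σ` and output alphabet `O`, with state type `Q`:
initial state `q0`, transition function `δ`, and output labeling `L`. -/
structure MooreMachine (σ O Q : Type*) where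
  q0 : Q
  δ : Q → σ → Q
  L : Q → O

/-- `M.run q w` is the extended transition function `δ*(q, w)`, the left fold of `δ` over `w`. -/
def MooreMachine.run {σ O Q : Type*} (M : MooreMachine σ O Q) (q : Q) (w : List σ) : Q :=
  w.foldl M.δ q

/-- An observation table `(S, E, T)`: finite sets of prefixes `S` (prefix-closed, containing ε)
and suffixes `E` (suffix-closed, containing ε), and an entry function `T`. -/
structure ObsTable (σ O : Type*) where
  S : Finset (List σ)
  E : Finset (List σ)
  T : List σ → O
  nil_mem_S : [] ∈ S
  prefixClosed : ∀ s ∈ S, ∀ t : List σ, t <+: s → t ∈ S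
  nil_mem_E : [] ∈ E
  suffixClosed : ∀ e ∈ E, ∀ t : List σ, t <:+ e → t ∈ E

/-- `row(s) : E → O`, given by `row(s)(e) = T(s·e)`. -/
def ObsTable.row {σ O : Type*} (Ot : ObsTable σ O) (s : List σ) : {e // e ∈ Ot.E} → O :=
  fun e => Ot.T (s ++ e.1)

/-- The table is closed if every `row(s·σ)` with `s ∈ S` coincides with `row(s')` for some `s' ∈ S`. -/
def ObsTable.Closed {σ O : Type*} (Ot : ObsTable σ O) : Prop :=
  ∀ s ∈ Ot.S, ∀ a : σ, ∃ s' ∈ Ot.S, Ot.row (s ++ [a]) = Ot.row s'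

/-- The table is consistent if equal rows of elements of `S` have equal one-step extensions. -/
def ObsTable.Consistent {σ O : Type*} (Ot : ObsTable σ O) : Prop :=
  ∀ s₁ ∈ Ot.S, ∀ s₂ ∈ Ot.S,
    Ot.row s₁ = Ot.row s₂ → ∀ a : σ, Ot.row (s₁ ++ [a]) = Ot.row (s₂ ++ [a])

/-- `s ∈ S ∪ {t·σ : t ∈ S, σ ∈ Σ}`, the rows of the observation table. -/
def ObsTable.InTableRows {σ O : Type*} (Ot : ObsTable σ O) (s : List σ) : Prop :=
  s ∈ Ot.S ∨ ∃ t ∈ Ot.S, ∃ a : σ, s = t ++ [a]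

/-- The state set of the hypothesis machine: `Q̂ = {row(s) : s ∈ S}`. -/
def ObsTable.HQ {σ O : Type*} (Ot : ObsTable σ O) : Type _ :=
  {f : {e // e ∈ Ot.E} → O // ∃ s ∈ Ot.S, Ot.row s = f}

/-- The hypothesis state `row(s)` for `s ∈ S`. -/
def ObsTable.stateOf {σ O : Type*} (Ot : ObsTable σ O) (s : List σ) (hs : s ∈ Ot.S) : Ot.HQ :=
  ⟨Ot.row s, s, hs, rfl⟩

/-- `M` is the hypothesis Moore machine of the table: its initial state is `row(ε)`,
its transitions satisfy `δ̂(row(s), σ) = row(s·σ)` for `s ∈ S`, and its outputs satisfy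
`L̂(row(s)) = row(s)(ε) = T(s)` for `s ∈ S`. -/
def ObsTable.IsHypothesis {σ O : Type*} (Ot : ObsTable σ O)
    (M : MooreMachine σ O Ot.HQ) : Prop :=
  M.q0 = Ot.stateOf [] Ot.nil_mem_S ∧
  (∀ s, ∀ hs : s ∈ Ot.S, ∀ a : σ, (M.δ (Ot.stateOf s hs) a).1 = Ot.row (s ++ [a])) ∧
  (∀ s, ∀ hs : s ∈ Ot.S, M.L (Ot.stateOf s hs) = Ot.T s)

/-- The number of states of the hypothesis machine: the number of distinct rows `row(s)`, `s ∈ S`. -/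
def ObsTable.numStates {σ O : Type*} [DecidableEq O] (Ot : ObsTable σ O) : ℕ :=
  (Ot.S.image Ot.row).card

/-- A Moore machine is consistent with the table if `L(δ*(q0, s·e)) = T(s·e)` for every
`s ∈ S ∪ S·Σ` and every `e ∈ E`. -/
def MooreMachine.ConsistentWith {σ O Q : Type*} (M : MooreMachine σ O Q)
    (Ot : ObsTable σ O) : Prop :=
  ∀ s : List σ, Ot.InTableRows s → ∀ e ∈ Ot.E, M.L (M.run M.q0 (s ++ e)) = Ot.T (s ++ e)

/-- `M` computes `f : Σ* → O` if `f(w) = L(δ*(q0, w))` for all `w`. -/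
def MooreMachine.Computes {σ O Q : Type*} (M : MooreMachine σ O Q) (f : List σ → O) : Prop :=
  ∀ w : List σ, f w = M.L (M.run M.q0 w)

/-- `φ` is an isomorphism of Moore machines: a bijection on states preserving the initial
state, the transitions, and the output labeling. -/
def MooreIso {σ O Q₁ Q₂ : Type*} (M₁ : MooreMachine σ O Q₁) (M₂ : MooreMachine σ O Q₂)
    (φ : Q₁ → Q₂) : Prop :=
  Function.Bijective φ ∧ φ M₁.q0 = M₂.q0 ∧
    (∀ q a, φ (M₁.δ q a) = M₂.δ (φ q) a) ∧ ∀ q, M₂.L (φ q) = M₁.L q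

universe u

/-!
Let `M'` be a machine computing `f` with at most `n` states, and give each of its states `q` the
row `e ↦ L'(δ'*(q, e))`. Since the table agrees with `f`, every table row `row(s)` is the row of
the state `M'` reaches on `s`. The `n` distinct rows over `S` therefore force this assignment of
rows to states to be injective, so two words of `S ∪ S·Σ` with equal table rows lead `M'` to the
same state. By induction on `w`, the hypothesis machine then always sits at the row of the state
of `M'` after `w`; reading off the `ε` column gives `L̂(δ̂*(q̂0, w)) = f(w)`.
-/

namespace MooreMachine

variable {σ O Q : Type*} (M : MooreMachine σ O Q)

theorem run_append (q : Q) (u v : List σ) : M.run q (u ++ v) = M.run (M.run q u) v :=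
  List.foldl_append

theorem run_concat (q : Q) (w : List σ) (a : σ) : M.run q (w ++ [a]) = M.δ (M.run q w) a := by
  rw [run_append]; rfl

def stateRow (E : Finset (List σ)) (q : Q) : {e // e ∈ E} → O :=
  fun e => M.L (M.run q e.1)

end MooreMachine

namespace ObsTable

variable {σ O Q : Type*} (Ot : ObsTable σ O)

theorem HQ.exists_eq_stateOf (q : Ot.HQ) : ∃ s, ∃ hs : s ∈ Ot.S, q = Ot.stateOf s hs := by
  obtain ⟨s, hs, hrow⟩ := q.2
  exact ⟨s, hs, Subtype.ext hrow.symm⟩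

variable {Ot}

theorem row_eq_stateRow {M' : MooreMachine σ O Q} {f : List σ → O} (hcomp : M'.Computes f)
    {s : List σ} (hs : ∀ e ∈ Ot.E, Ot.T (s ++ e) = f (s ++ e)) :
    Ot.row s = M'.stateRow Ot.E (M'.run M'.q0 s) := by
  funext e
  rw [row, hs e.1 e.2, hcomp, MooreMachine.run_append]
  rfl

theorem stateRow_injective [DecidableEq O] [Fintype Q] {M' : MooreMachine σ O Q}
    (hcard : Fintype.card Q ≤ Ot.numStates)
    (hrow : ∀ s ∈ Ot.S, Ot.row s = M'.stateRow Ot.E (M'.run M'.q0 s)) :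
    Function.Injective (M'.stateRow Ot.E) := by
  have hsub : Ot.S.image Ot.row ⊆ Finset.univ.image (M'.stateRow Ot.E) := by
    intro r hr
    obtain ⟨s, hs, rfl⟩ := Finset.mem_image.mp hr
    exact Finset.mem_image.mpr ⟨_, Finset.mem_univ _, (hrow s hs).symm⟩
  have hcard_image : (Finset.univ.image (M'.stateRow Ot.E)).card = (Finset.univ : Finset Q).card :=
    le_antisymm Finset.card_image_le
      (by simpa using hcard.trans (Finset.card_le_card hsub))
  intro q₁ q₂ h
  exact Finset.injOn_of_card_image_eq hcard_image (Finset.mem_univ q₁) (Finset.mem_univ q₂) h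

namespace IsHypothesis

variable {M : MooreMachine σ O Ot.HQ} (hM : Ot.IsHypothesis M)
include hM

theorem L_eq (q : Ot.HQ) : M.L q = q.1 ⟨[], Ot.nil_mem_E⟩ := by
  obtain ⟨s, hs, rfl⟩ := HQ.exists_eq_stateOf Ot q
  rw [hM.2.2 s hs]
  simp [stateOf, row]

theorem run_val_eq_stateRow {M' : MooreMachine σ O Q}
    (hrow : ∀ s, Ot.InTableRows s → Ot.row s = M'.stateRow Ot.E (M'.run M'.q0 s))
    (hinj : Function.Injective (M'.stateRow Ot.E)) (w : List σ) :
    (M.run M.q0 w).1 = M'.stateRow Ot.E (M'.run M'.q0 w) := by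
  induction w using List.reverseRecOn with
  | nil =>
    change M.q0.1 = _
    rw [hM.1]
    exact hrow [] (Or.inl Ot.nil_mem_S)
  | append_singleton w a ih =>
    -- `δ̂` is only known on states written as `row(s)` with `s ∈ S`; injectivity moves `w` to `s`.
    obtain ⟨s, hs, hq⟩ := HQ.exists_eq_stateOf Ot (M.run M.q0 w)
    have hsw : M'.run M'.q0 s = M'.run M'.q0 w :=
      hinj (by rw [← hrow s (Or.inl hs), ← ih, hq]; rfl)
    rw [MooreMachine.run_concat, MooreMachine.run_concat, hq, hM.2.1 s hs a, ← hsw,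
      ← MooreMachine.run_concat, hrow (s ++ [a]) (Or.inr ⟨s, hs, a, rfl⟩)]

end IsHypothesis

end ObsTable

theorem hypothesis_computes_target_general {σ O : Type*} [DecidableEq O]
    (Ot : ObsTable σ O)
    (M : MooreMachine σ O Ot.HQ) (hM : Ot.IsHypothesis M)
    (f : List σ → O)
    (hf : ∃ (Q : Type u) (_ : Fintype Q) (M' : MooreMachine σ O Q),
        Fintype.card Q ≤ Ot.numStates ∧ M'.Computes f)
    (hagree : ∀ s : List σ, Ot.InTableRows s → ∀ e ∈ Ot.E, Ot.T (s ++ e) = f (s ++ e)) :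
    ∀ w : List σ, M.L (M.run M.q0 w) = f w := by
  obtain ⟨Q, _, M', hcard, hcomp⟩ := hf
  have hrow : ∀ s, Ot.InTableRows s → Ot.row s = M'.stateRow Ot.E (M'.run M'.q0 s) :=
    fun s hs => ObsTable.row_eq_stateRow hcomp (hagree s hs)
  have hinj := ObsTable.stateRow_injective hcard fun s hs => hrow s (Or.inl hs)
  intro w
  rw [hM.L_eq, hM.run_val_eq_stateRow hrow hinj w, hcomp w]
  rfl

/-- If `f` is computed by some Moore machine with at most `n = |Q̂|` states and
the table agrees with `f` on all its entries, then the hypothesis machine computes `f`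
exactly: `L̂(δ̂*(q̂0, w)) = f(w)` for every sequence `w`. -/
theorem hypothesis_computes_target {σ O : Type*} [Fintype σ] [Nonempty σ]
    [Fintype O] [Nonempty O] [DecidableEq O]
    (Ot : ObsTable σ O) (hclosed : Ot.Closed) (hcons : Ot.Consistent)
    (M : MooreMachine σ O Ot.HQ) (hM : Ot.IsHypothesis M)
    (f : List σ → O)
    (hf : ∃ (Q : Type u) (_ : Fintype Q) (M' : MooreMachine σ O Q),
        Fintype.card Q ≤ Ot.numStates ∧ M'.Computes f)
    (hagree : ∀ s : List σ, Ot.InTableRows s → ∀ e ∈ Ot.E, Ot.T (s ++ e) = f (s ++ e)) :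
    ∀ w : List σ, M.L (M.run M.q0 w) = f w :=
  hypothesis_computes_target_general Ot M hM f hf hagree
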